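/- arXiv:2305.17598 — 5 statements merged into one kernel-verified Lean document; each statement's English description precedes it below -/
import Mathlib

section
/- If a coloring λ* is within a factor r of the optimum for the linear penalty objective Σ_e p(e,λ) (in particular if it is optimal for it), then λ* is an r-approximation for the edge-mistake objective Σ_e 𝟙(e ∈ M_λ), where an edge is a mistake if some node in it lacks the edge's color. Formally: if Σ_e p(e,λ*) ≤ Σ_e p(e,λ) for all feasible λ, and every edge has size at most r, then Σ_e 𝟙(e ∈ M_{λ*}) ≤ r · Σ_e 𝟙(e ∈ M_λ) for all feasible λ. -/
/-! An edge is a mistake exactly when its penalty is positive, and its penalty is at most its size,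
hence at most `r`. So `#M(λ*) ≤ Σ p(·,λ*) ≤ Σ p(·,λ) ≤ r · #M(λ)`. -/

open Finset

section PositivityCount

variable {ι : Type*} (s : Finset ι) (f : ι → ℕ)

theorem sum_ite_pos_le_sum :
    (∑ i ∈ s, if 1 ≤ f i then 1 else 0) ≤ ∑ i ∈ s, f i :=
  sum_le_sum fun i _ => by split <;> omega

theorem sum_le_mul_sum_ite_pos {r : ℕ} (hf : ∀ i ∈ s, f i ≤ r) :
    ∑ i ∈ s, f i ≤ r * ∑ i ∈ s, if 1 ≤ f i then 1 else 0 := by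
  rw [mul_sum]
  exact sum_le_sum fun i hi => by have := hf i hi; split <;> omega

end PositivityCount

theorem linear_opt_gives_r_approx_general {V ι : Type*} (k r : ℕ)
    (E : Finset ι) (edge : ι → Finset V) (color : ι → Fin k)
    (hr : ∀ e ∈ E, (edge e).card ≤ r)
    (Feas : (V → Finset (Fin k)) → Prop)
    (lamStar : V → Finset (Fin k))
    (hopt : ∀ lam : V → Finset (Fin k), Feas lam →
      ∑ e ∈ E, ((edge e).filter (fun v => color e ∉ lamStar v)).card ≤
        ∑ e ∈ E, ((edge e).filter (fun v => color e ∉ lam v)).card) :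
    ∀ lam : V → Finset (Fin k), Feas lam →
      (∑ e ∈ E, if 1 ≤ ((edge e).filter (fun v => color e ∉ lamStar v)).card then 1 else 0) ≤
        r * ∑ e ∈ E, if 1 ≤ ((edge e).filter (fun v => color e ∉ lam v)).card then 1 else 0 := by
  intro lam hlam
  calc _ ≤ ∑ e ∈ E, ((edge e).filter (fun v => color e ∉ lamStar v)).card :=
        sum_ite_pos_le_sum _ _
    _ ≤ ∑ e ∈ E, ((edge e).filter (fun v => color e ∉ lam v)).card := hopt lam hlam
    _ ≤ _ := sum_le_mul_sum_ite_pos _ _ fun e he => (card_filter_le _ _).trans (hr e he)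

theorem linear_opt_gives_r_approx {V ι : Type*} [DecidableEq V] (k r : ℕ)
    (E : Finset ι) (edge : ι → Finset V) (color : ι → Fin k)
    (hr : ∀ e ∈ E, (edge e).card ≤ r)
    (Feas : (V → Finset (Fin k)) → Prop)
    (lamStar : V → Finset (Fin k)) (hFeas : Feas lamStar)
    (hopt : ∀ lam : V → Finset (Fin k), Feas lam →
      ∑ e ∈ E, ((edge e).filter (fun v => color e ∉ lamStar v)).card ≤
        ∑ e ∈ E, ((edge e).filter (fun v => color e ∉ lam v)).card) :
    ∀ lam : V → Finset (Fin k), Feas lam →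
      (∑ e ∈ E, if 1 ≤ ((edge e).filter (fun v => color e ∉ lamStar v)).card then 1 else 0) ≤
        r * ∑ e ∈ E, if 1 ≤ ((edge e).filter (fun v => color e ∉ lam v)).card then 1 else 0 :=
  linear_opt_gives_r_approx_general k r E edge color hr Feas lamStar hopt
end

section
/- (Budget bound in LP rounding for GOECC, per-node.) Let δ ∈ (0,1), y ≥ 0 a real, k ≥ 1 an integer, and x : [k] → [0,1] with Σ_{c=1}^k x(c) ≥ k - y - 1. Set ρ = (1-δ)/(⌊y⌉_δ + 2), where ⌊y⌉_δ is the δ-rounding of y. Then the number of colors c with x(c) < ρ is at most ⌊y⌉_δ + 1. -/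
/-! Each color with `x c < ρ` falls short of `1` by at least `1 - ρ`, while the total shortfall
`k - ∑ x` is at most `y + 1 < ⌊y⌉_δ + 1 + δ = (1 - ρ) (⌊y⌉_δ + 2)`. Hence fewer than
`⌊y⌉_δ + 2` colors lie below `ρ`. -/

noncomputable def deltaRound (δ x : ℝ) : ℤ :=
  if x - ⌊x⌋ < δ then ⌊x⌋ else ⌈x⌉

open Finset

lemma deltaRound_nonneg (δ : ℝ) {y : ℝ} (hy : 0 ≤ y) : 0 ≤ deltaRound δ y := by
  unfold deltaRound
  split_ifs
  · exact Int.floor_nonneg.mpr hy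
  · exact Int.ceil_nonneg hy

lemma lt_deltaRound_add {δ : ℝ} (hδ : 0 < δ) (y : ℝ) : y < deltaRound δ y + δ := by
  unfold deltaRound
  split_ifs with h
  · linarith
  · linarith [Int.le_ceil y]

lemma card_filter_lt_mul_one_sub_le {ι : Type*} (s : Finset ι) (f : ι → ℝ)
    (hf : ∀ i ∈ s, f i ≤ 1) (ρ : ℝ) :
    (#(s.filter (f · < ρ)) : ℝ) * (1 - ρ) ≤ ∑ i ∈ s, (1 - f i) :=
  calc (#(s.filter (f · < ρ)) : ℝ) * (1 - ρ) = ∑ _i ∈ s.filter (f · < ρ), (1 - ρ) := by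
        rw [sum_const, nsmul_eq_mul]
    _ ≤ ∑ i ∈ s.filter (f · < ρ), (1 - f i) :=
        sum_le_sum fun i hi => by linarith [(mem_filter.mp hi).2]
    _ ≤ ∑ i ∈ s, (1 - f i) :=
        sum_le_sum_of_subset_of_nonneg (filter_subset _ s)
          fun i hi _ => by linarith [hf i hi]

theorem goecc_node_budget_bound_general (k : ℕ)
    (δ y : ℝ) (hδ0 : 0 < δ) (hy : 0 ≤ y)
    (x : Fin k → ℝ) (hx : ∀ c, 0 ≤ x c ∧ x c ≤ 1)
    (hsum : (k : ℝ) - y - 1 ≤ ∑ c, x c)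
    (ρ : ℝ) (hρ : ρ = (1 - δ) / ((deltaRound δ y : ℝ) + 2)) :
    ((Finset.univ.filter (fun c : Fin k => x c < ρ)).card : ℝ) ≤ (deltaRound δ y : ℝ) + 1 := by
  set r := deltaRound δ y
  set m := (Finset.univ.filter (fun c : Fin k => x c < ρ)).card
  have hr : (0 : ℝ) ≤ r := by exact_mod_cast deltaRound_nonneg δ hy
  have hgap : (1 - ρ) * (r + 2) = r + 1 + δ := by
    rw [hρ]
    field_simp
    ring
  have hgap_pos : 0 < 1 - ρ := by nlinarith
  have hcount : (m : ℝ) * (1 - ρ) < (r + 2) * (1 - ρ) := by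
    have hshortfall := card_filter_lt_mul_one_sub_le univ x (fun c _ => (hx c).2) ρ
    rw [sum_sub_distrib, sum_const, card_univ, Fintype.card_fin, nsmul_one] at hshortfall
    linarith [lt_deltaRound_add hδ0 y]
  have hm : (m : ℤ) < r + 2 := by exact_mod_cast lt_of_mul_lt_mul_right hcount hgap_pos.le
  exact_mod_cast (show (m : ℤ) ≤ r + 1 by omega)

theorem goecc_node_budget_bound (k : ℕ) (hk : 1 ≤ k)
    (δ y : ℝ) (hδ0 : 0 < δ) (hδ1 : δ < 1) (hy : 0 ≤ y)
    (x : Fin k → ℝ) (hx : ∀ c, 0 ≤ x c ∧ x c ≤ 1)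
    (hsum : (k : ℝ) - y - 1 ≤ ∑ c, x c)
    (ρ : ℝ) (hρ : ρ = (1 - δ) / ((deltaRound δ y : ℝ) + 2)) :
    ((Finset.univ.filter (fun c : Fin k => x c < ρ)).card : ℝ) ≤ (deltaRound δ y : ℝ) + 1 :=
  goecc_node_budget_bound_general k δ y hδ0 hy x hx hsum ρ hρ
end

section
/- (LP integrality gap for RECC.) There is an edge-colored hypergraph (4 nodes v1,v2,v3,v4; edges e1 = {v1,v2,v3} of color 1 and e2 = {v2,v3,v4} of color 2) and budget b = 1 such that every assignment λ giving exactly one color to each non-deleted node and deleting at most 1 node makes at least one edge mistake, while there is a feasible fractional solution to the RECC LP relaxation with objective value 0 (e.g., x_{v2}^1 = x_{v2}^2 = x_{v3}^1 = x_{v3}^2 = z_{v2} = z_{v3} = 1/2, all other x_v^c appropriately set, x_{e1} = x_{e2} = 0). -/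
/-!
The edges share the two nodes `1` and `2`. A budget of one deletion spares one of them, and a
surviving shared node would need both edge colours. Fractionally, each shared node takes half
of each colour and is half deleted, so `x v c - z v ≤ 0` on both edges at total deletion `1`.
-/

lemma Finset.notMem_or_notMem_of_card_le_one {α : Type*} {D : Finset α}
    (hD : D.card ≤ 1) {u w : α} (huw : u ≠ w) : u ∉ D ∨ w ∉ D := by
  by_contra! h
  exact huw (Finset.card_le_one.mp hD u h.1 w h.2)

lemma exists_mistake_of_mem_inter {V C : Type*} {e₁ e₂ D : Finset V} {lam : V → C} {c₁ c₂ : C}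
    (hc : c₁ ≠ c₂) {v : V} (hv₁ : v ∈ e₁) (hv₂ : v ∈ e₂) (hvD : v ∉ D) :
    (∃ v ∈ e₁, v ∉ D ∧ lam v ≠ c₁) ∨ (∃ v ∈ e₂, v ∉ D ∧ lam v ≠ c₂) := by
  by_cases hl : lam v = c₁
  · exact .inr ⟨v, hv₂, hvD, hl ▸ hc⟩
  · exact .inl ⟨v, hv₁, hvD, hl⟩

theorem recc_lp_integrality_gap :
    let e1 : Finset (Fin 4) := {0, 1, 2}
    let e2 : Finset (Fin 4) := {1, 2, 3}
    -- every integral solution with at most 1 deleted node makes a mistake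
    ((∀ (lam : Fin 4 → Fin 2) (D : Finset (Fin 4)), D.card ≤ 1 →
        (∃ v ∈ e1, v ∉ D ∧ lam v ≠ 0) ∨ (∃ v ∈ e2, v ∉ D ∧ lam v ≠ 1)) ∧
    -- there is a feasible fractional LP solution with objective value 0
      (∃ (x : Fin 4 → Fin 2 → ℝ) (xe : Fin 2 → ℝ) (z : Fin 4 → ℝ),
        (∀ v c, 0 ≤ x v c ∧ x v c ≤ 1) ∧
        (∀ v, 0 ≤ z v ∧ z v ≤ 1) ∧
        (∀ e, 0 ≤ xe e ∧ xe e ≤ 1) ∧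
        (∀ v, (2 : ℝ) - 1 ≤ ∑ c, x v c) ∧
        (∀ v ∈ e1, x v 0 - z v ≤ xe 0) ∧
        (∀ v ∈ e2, x v 1 - z v ≤ xe 1) ∧
        (∑ v, z v ≤ 1) ∧
        xe 0 + xe 1 = 0)) := by
  intro e1 e2
  refine ⟨fun lam D hD => ?_, ?_⟩
  · rcases Finset.notMem_or_notMem_of_card_le_one hD (by decide : (1 : Fin 4) ≠ 2) with h | h
    · exact exists_mistake_of_mem_inter (by decide) (by decide) (by decide) h
    · exact exists_mistake_of_mem_inter (by decide) (by decide) (by decide) h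
  · refine ⟨![![0, 1], ![1/2, 1/2], ![1/2, 1/2], ![1, 0]], ![0, 0], ![0, 1/2, 1/2, 0],
      ?_, ?_, ?_, ?_, ?_, ?_, ?_, by norm_num⟩
    · intro v c; fin_cases v <;> fin_cases c <;> norm_num
    · intro v; fin_cases v <;> norm_num
    · intro e; fin_cases e <;> norm_num
    · intro v; fin_cases v <;> norm_num [Fin.sum_univ_two]
    · intro v hv; fin_cases hv <;> norm_num [Matrix.cons_val_two, Matrix.cons_val_three]
    · intro v hv; fin_cases hv <;> norm_num [Matrix.cons_val_two, Matrix.cons_val_three]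
    · norm_num [Fin.sum_univ_four, Matrix.cons_val_two, Matrix.cons_val_three]
end

section
/- (Kernel size for LOECC.) Suppose every node of an edge-colored hypergraph H is incident to edges of more than b distinct colors (no easy nodes), every hyperedge has size at most r, and there exists a set X of at most t edges such that assigning at most b colors per node satisfies all edges of E ∖ X. Then H has at most r·t nodes. -/
/-!
A vertex lying on no edge of `X` has all its incident edges satisfied, so all of its colours lie
in `lam v`, which has at most `b` elements; that vertex would be easy. Hence the at most `t` edges
of `X`, each with at most `r` vertices, cover every vertex.
-/

open Finset

theorem mem_biUnion_of_card_lt_card_image_color {V ι κ : Type*} [DecidableEq V] [DecidableEq ι]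
    [DecidableEq κ] {E X : Finset ι} {edge : ι → Finset V} {color : ι → κ}
    {lam : V → Finset κ} (hsat : ∀ e ∈ E \ X, ∀ v ∈ edge e, color e ∈ lam v) {v : V}
    (hv : #(lam v) < #((E.filter (fun e => v ∈ edge e)).image color)) :
    v ∈ X.biUnion edge := by
  by_contra hvX
  have hcolors : (E.filter (fun e => v ∈ edge e)).image color ⊆ lam v := by
    rintro _ hc
    obtain ⟨e, he, rfl⟩ := mem_image.mp hc
    obtain ⟨heE, hve⟩ := mem_filter.mp he
    exact hsat e (mem_sdiff.mpr ⟨heE, fun heX => hvX (mem_biUnion.mpr ⟨e, heX, hve⟩)⟩) v hve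
  exact (card_le_card hcolors).not_gt hv

theorem loecc_kernel_size {V ι : Type*} [Fintype V] [DecidableEq V] [DecidableEq ι]
    (k r t b : ℕ)
    (E : Finset ι) (edge : ι → Finset V) (color : ι → Fin k)
    (hNoEasy : ∀ v : V, b < ((E.filter (fun e => v ∈ edge e)).image color).card)
    (hr : ∀ e ∈ E, (edge e).card ≤ r)
    (hSol : ∃ X ⊆ E, X.card ≤ t ∧ ∃ lam : V → Finset (Fin k),
      (∀ v, (lam v).card ≤ b) ∧ ∀ e ∈ E \ X, ∀ v ∈ edge e, color e ∈ lam v) :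
    Fintype.card V ≤ r * t := by
  obtain ⟨X, hXE, hXt, lam, hlam, hsat⟩ := hSol
  have hcover : (univ : Finset V) ⊆ X.biUnion edge := fun v _ =>
    mem_biUnion_of_card_lt_card_image_color hsat ((hlam v).trans_lt (hNoEasy v))
  calc Fintype.card V = #(univ : Finset V) := card_univ.symm
    _ ≤ #(X.biUnion edge) := card_le_card hcover
    _ ≤ #X * r := card_biUnion_le_card_mul X edge r fun e he => hr e (hXE he)
    _ ≤ t * r := Nat.mul_le_mul_right r hXt
    _ = r * t := mul_comm t r
end

section
/- (Correctness of the Partial Vertex Cover reduction, forward direction.) Let G be a graph with m edges and let (G, t, s) be a Partial Vertex Cover instance. Construct the hypergraph H with a node u_f per edge f of G and a hyperedge e_v per vertex v of G containing {u_f : f incident to v}, each e_v receiving a distinct color. If Y is a set of at most t vertices of G covering at least s edges, then deleting X = {e_v : v ∈ Y} from H leaves a hypergraph whose edges can all be satisfied by an assignment λ with |λ(u)| ≥ 1 for all nodes u and Σ_u (|λ(u)| - 1) ≤ m - s. -/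
/-!
The node `u_f` of an edge `f` receives the colors of those endpoints of `f` that lie outside `Y`,
or one arbitrary color when both endpoints lie in `Y`. Every surviving hyperedge `e_v` (`v ∉ Y`) is
then satisfied, each node gets at most two colors, and a node whose edge is covered by `Y` loses the
color of a covering endpoint, so it gets exactly one. Hence only the at most `m - s` uncovered edges
contribute an extra color.
-/

open Finset

theorem Sym2.card_toFinset_le_two {α : Type*} [DecidableEq α] (z : Sym2 α) : #z.toFinset ≤ 2 := by
  rw [Sym2.card_toFinset]
  split_ifs <;> omega

theorem Sym2.card_toFinset_sdiff_le_one {α : Type*} [DecidableEq α] {z : Sym2 α} {Y : Finset α}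
    (hz : ∃ v ∈ Y, v ∈ z) : #(z.toFinset \ Y) ≤ 1 := by
  obtain ⟨v, hvY, hvz⟩ := hz
  have hinter : 1 ≤ #(z.toFinset ∩ Y) :=
    card_pos.mpr ⟨v, mem_inter.mpr ⟨Sym2.mem_toFinset.mpr hvz, hvY⟩⟩
  have := card_sdiff_add_card_inter z.toFinset Y
  have := z.card_toFinset_le_two
  omega

theorem Finset.sum_tsub_one_le_card_filter_not {ι : Type*} (s : Finset ι) (p : ι → Prop)
    [DecidablePred p] (c : ι → ℕ) (hc : ∀ i ∈ s, c i ≤ 2) (hp : ∀ i ∈ s, p i → c i ≤ 1) :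
    ∑ i ∈ s, (c i - 1) ≤ #(s.filter fun i => ¬ p i) := by
  rw [card_filter]
  refine sum_le_sum fun i hi => ?_
  by_cases h : p i
  · simp only [h, not_true_eq_false, if_false]
    have := hp i hi h
    omega
  · simp only [h, not_false_eq_true, if_true]
    have := hc i hi
    omega

section DeletionColoring

variable {V : Type*} [DecidableEq V]

noncomputable def deletionColoring (Y : Finset V) (f : Sym2 V) : Finset V :=
  if (f.toFinset \ Y).Nonempty then f.toFinset \ Y else {f.out.1}

variable (Y : Finset V) (f : Sym2 V)

theorem one_le_card_deletionColoring : 1 ≤ #(deletionColoring Y f) := by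
  unfold deletionColoring
  split_ifs with h
  exacts [card_pos.mpr h, (card_singleton _).ge]

theorem card_deletionColoring_le_two : #(deletionColoring Y f) ≤ 2 := by
  unfold deletionColoring
  split_ifs
  exacts [(card_le_card sdiff_subset).trans f.card_toFinset_le_two, by simp]

variable {Y f}

theorem card_deletionColoring_le_one (hf : ∃ v ∈ Y, v ∈ f) : #(deletionColoring Y f) ≤ 1 := by
  unfold deletionColoring
  split_ifs
  exacts [Sym2.card_toFinset_sdiff_le_one hf, (card_singleton _).le]

theorem mem_deletionColoring {v : V} (hvY : v ∉ Y) (hvf : v ∈ f) : v ∈ deletionColoring Y f := by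
  have hv : v ∈ f.toFinset \ Y := mem_sdiff.mpr ⟨Sym2.mem_toFinset.mpr hvf, hvY⟩
  rw [deletionColoring, if_pos ⟨v, hv⟩]
  exact hv

end DeletionColoring

theorem pvc_reduction_forward_general {V : Type*} [Fintype V] [DecidableEq V]
    (G : SimpleGraph V) [DecidableRel G.Adj]
    (m s : ℕ) (hm : m = G.edgeFinset.card)
    (Y : Finset V)
    (hcover : s ≤ (G.edgeFinset.filter (fun f => ∃ v ∈ Y, v ∈ f)).card) :
    ∃ lam : Sym2 V → Finset V,
      -- every node (edge of G) gets at least one color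
      (∀ f ∈ G.edgeFinset, 1 ≤ (lam f).card) ∧
      -- at most m - s additional color assignments are used in total
      (∑ f ∈ G.edgeFinset, ((lam f).card - 1)) ≤ m - s ∧
      -- every hyperedge e_v with v ∉ Y (not deleted) is satisfied:
      -- each node u_f with f incident to v receives the color v
      (∀ v : V, v ∉ Y → ∀ f ∈ G.edgeFinset, v ∈ f → v ∈ lam f) := by
  refine ⟨deletionColoring Y, fun f _ => one_le_card_deletionColoring Y f, ?_,
    fun v hvY f _ hvf => mem_deletionColoring hvY hvf⟩
  have hsplit := card_filter_add_card_filter_not (s := G.edgeFinset) (fun f => ∃ v ∈ Y, v ∈ f)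
  calc ∑ f ∈ G.edgeFinset, (#(deletionColoring Y f) - 1)
      ≤ #(G.edgeFinset.filter fun f => ¬ ∃ v ∈ Y, v ∈ f) :=
        sum_tsub_one_le_card_filter_not _ _ _ (fun f _ => card_deletionColoring_le_two Y f)
          fun _ _ hf => card_deletionColoring_le_one hf
    _ ≤ m - s := by omega

theorem pvc_reduction_forward {V : Type*} [Fintype V] [DecidableEq V]
    (G : SimpleGraph V) [DecidableRel G.Adj]
    (m t s : ℕ) (hm : m = G.edgeFinset.card)
    (Y : Finset V) (hYcard : Y.card ≤ t)
    (hcover : s ≤ (G.edgeFinset.filter (fun f => ∃ v ∈ Y, v ∈ f)).card) :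
    ∃ lam : Sym2 V → Finset V,
      -- every node (edge of G) gets at least one color
      (∀ f ∈ G.edgeFinset, 1 ≤ (lam f).card) ∧
      -- at most m - s additional color assignments are used in total
      (∑ f ∈ G.edgeFinset, ((lam f).card - 1)) ≤ m - s ∧
      -- every hyperedge e_v with v ∉ Y (not deleted) is satisfied:
      -- each node u_f with f incident to v receives the color v
      (∀ v : V, v ∉ Y → ∀ f ∈ G.edgeFinset, v ∈ f → v ∈ lam f) :=
  pvc_reduction_forward_general G m s hm Y hcover
end
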